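/- arXiv:0807.4229 — 2 statements merged into one kernel-verified Lean document; each statement's English description precedes it below -/
import Mathlib

section
/- Let F be a map from {0,1}^n to itself. If I ⊆ {1,…,n} is a set of vertices such that every positive circuit of the global interaction graph 𝐆(F) (the union over all (x,v) ∈ X' of the local interaction graphs 𝐆_F(x,v)) has at least one vertex in I, then the number of fixed points of F is at most 2^{|I|}. -/
/-! Common definitions for discrete dynamical systems on products of
integer intervals, following Richard, "Positive circuits and maximal
number of fixed points in discrete dynamical systems". -/

/-- The state space `X = ∏ i, [a i, b i]` as a subset of `Fin n → ℤ`. -/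
def StateSpace {n : ℕ} (a b : Fin n → ℤ) : Set (Fin n → ℤ) :=
  {x | ∀ i, a i ≤ x i ∧ x i ≤ b i}

/-- `v` is a directional vector, i.e. `v ∈ {-1,1}^n`. -/
def IsDir {n : ℕ} (v : Fin n → ℤ) : Prop := ∀ i, v i = 1 ∨ v i = -1

/-- `(x, v) ∈ X'`: `x ∈ X`, `v ∈ {-1,1}^n` and `x + v ∈ X`. -/
def InX' {n : ℕ} (a b : Fin n → ℤ) (x v : Fin n → ℤ) : Prop :=
  x ∈ StateSpace a b ∧ IsDir v ∧ (x + v) ∈ StateSpace a b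

/-- Discrete Jacobian entry `f_ij(x,v) = (f_i(x + v_j e_j) - f_i(x)) / v_j`. -/
def jac {n : ℕ} (F : (Fin n → ℤ) → Fin n → ℤ) (x v : Fin n → ℤ) (i j : Fin n) : ℤ :=
  (F (Function.update x j (x j + v j)) i - F x i) / v j

/-- A signed edge `(j, s, i)`: initial vertex `j`, sign `s`, final vertex `i`. -/
abbrev SEdge (n : ℕ) := Fin n × ℤ × Fin n

/-- Edge set of the local interaction graph `𝐆_F(x,v)`: a positive
(resp. negative) edge from `j` to `i` iff `f_ij(x,v) > 0` (resp. `< 0`). -/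
def localGraph {n : ℕ} (F : (Fin n → ℤ) → Fin n → ℤ) (x v : Fin n → ℤ) :
    Set (SEdge n) :=
  {e | (e.2.1 = 1 ∧ 0 < jac F x v e.2.2 e.1) ∨ (e.2.1 = -1 ∧ jac F x v e.2.2 e.1 < 0)}

/-- `p` and `q` are on both sides of `t`. -/
def BothSides (p q t : ℚ) : Prop := (p < t ∧ t < q) ∨ (q < t ∧ t < p)

/-- Edge set of the local interaction graph with thresholds `G_F(x,v)`:
an edge `(j,s,i)` of `𝐆_F(x,v)` such that moreover `f_i(x)` and
`f_i(x + v_j e_j)` are on both sides of the threshold `x_i + v_i / 2`. -/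
def localGraphT {n : ℕ} (F : (Fin n → ℤ) → Fin n → ℤ) (x v : Fin n → ℤ) :
    Set (SEdge n) :=
  {e | e ∈ localGraph F x v ∧
    BothSides (F x e.2.2) (F (Function.update x e.1 (x e.1 + v e.1)) e.2.2)
      ((x e.2.2 : ℚ) + (v e.2.2 : ℚ) / 2)}

/-- `c` is an (elementary) circuit of the signed graph with edge set `E`:
a nonempty sequence of consecutive edges, closing up, whose initial
vertices are mutually distinct. -/
def IsCircuit {n : ℕ} (E : Set (SEdge n)) (c : List (SEdge n)) : Prop :=
  c ≠ [] ∧ (∀ e ∈ c, e ∈ E) ∧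
  (∀ (k : ℕ) (h : k + 1 < c.length),
    (c.get ⟨k, Nat.lt_of_succ_lt h⟩).2.2 = (c.get ⟨k + 1, h⟩).1) ∧
  (c.getLast?).map (fun e => e.2.2) = (c.head?).map (fun e => e.1) ∧
  (c.map (fun e => e.1)).Nodup

/-- A positive circuit: a circuit whose product of signs is positive. -/
def IsPosCircuit {n : ℕ} (E : Set (SEdge n)) (c : List (SEdge n)) : Prop :=
  IsCircuit E c ∧ 0 < (c.map (fun e => e.2.1)).prod

/-- The graph `E` has a positive circuit. -/
def HasPosCircuit {n : ℕ} (E : Set (SEdge n)) : Prop := ∃ c, IsPosCircuit E c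

/-- Vertex `i` belongs to some positive circuit of `E`. -/
def MemPosCircuit {n : ℕ} (E : Set (SEdge n)) (i : Fin n) : Prop :=
  ∃ c, IsPosCircuit E c ∧ i ∈ c.map (fun e => e.1)

/-- `I` is a positive feedback vertex set of `E`: every positive circuit
of `E` has at least one vertex in `I`. -/
def IsPFVS {n : ℕ} (E : Set (SEdge n)) (I : Finset (Fin n)) : Prop :=
  ∀ c, IsPosCircuit E c → ∃ i ∈ I, i ∈ c.map (fun e => e.1)

/-- `T_i(G_F)`: the set of real numbers `t` such that `t = x_i + v_i/2` for
some `(x,v) ∈ X'` such that `i` belongs to a positive circuit of `G_F(x,v)`. -/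
def Tset {n : ℕ} (a b : Fin n → ℤ) (F : (Fin n → ℤ) → Fin n → ℤ) (i : Fin n) : Set ℝ :=
  {t | ∃ x v, InX' a b x v ∧ t = (x i : ℝ) + (v i : ℝ) / 2 ∧
    MemPosCircuit (localGraphT F x v) i}

/-- Edge set of the global interaction graph `𝐆(F)` (without thresholds). -/
def globalGraph {n : ℕ} (a b : Fin n → ℤ) (F : (Fin n → ℤ) → Fin n → ℤ) :
    Set (SEdge n) :=
  ⋃ (x : Fin n → ℤ) (v : Fin n → ℤ) (_ : InX' a b x v), localGraph F x v

/-- Edge set of the global interaction graph `G(F)` (with thresholds). -/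
def globalGraphT {n : ℕ} (a b : Fin n → ℤ) (F : (Fin n → ℤ) → Fin n → ℤ) :
    Set (SEdge n) :=
  ⋃ (x : Fin n → ℤ) (v : Fin n → ℤ) (_ : InX' a b x v), localGraphT F x v

/-- Edge relation of the asynchronous state transition graph `Γ(F)`. -/
def Async {n : ℕ} (F : (Fin n → ℤ) → Fin n → ℤ) (x y : Fin n → ℤ) : Prop :=
  ∃ i, F x i ≠ x i ∧ y = Function.update x i (x i + (F x i - x i).sign)

/-- A trap domain of `Γ(F)`: a nonempty subset of `X` closed under the
edges of `Γ(F)`. -/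
def IsTrapDomain {n : ℕ} (a b : Fin n → ℤ) (F : (Fin n → ℤ) → Fin n → ℤ)
    (A : Set (Fin n → ℤ)) : Prop :=
  A.Nonempty ∧ A ⊆ StateSpace a b ∧ ∀ x ∈ A, ∀ y, Async F x y → y ∈ A

/-- An attractor of `Γ(F)`: a trap domain minimal for inclusion. -/
def IsAttractor {n : ℕ} (a b : Fin n → ℤ) (F : (Fin n → ℤ) → Fin n → ℤ)
    (A : Set (Fin n → ℤ)) : Prop :=
  IsTrapDomain a b F A ∧ ∀ B, IsTrapDomain a b F B → B ⊆ A → B = A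

/-! Two fixed points `x ≠ y` agreeing on `I` are impossible. Put `σ = x - y`. If `σ i ≠ 0`, then
on a monotone path from `x` to `y` in the cube, flipping one coordinate at a time, `F_i` must
move from `x_i` to `y_i`; the flip of the responsible coordinate `j` gives an edge `j → i` of
`𝐆(F)` of sign `σ_j σ_i`, with `σ_j ≠ 0`. Following such predecessors inside the support of `σ`
closes a circuit, whose sign is a product of squares, hence positive, and which avoids `I`.
So restricting fixed points to `I` is injective. -/

open Function

theorem Function.exists_iterate_mem_periodicPts {α : Type*} [Finite α] (f : α → α) (x : α) :
    ∃ p, f^[p] x ∈ periodicPts f := by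
  obtain ⟨p, q, hne, hpq⟩ := Finite.exists_ne_map_eq_of_infinite fun k : ℕ => f^[k] x
  wlog hlt : p < q generalizing p q
  · exact this q p hne.symm hpq.symm (by omega)
  refine ⟨p, q - p, by omega, ?_⟩
  rw [IsPeriodicPt, IsFixedPt, ← iterate_add_apply, Nat.sub_add_cancel hlt.le, hpq]

variable {n : ℕ}

theorem isCircuit_of_closedWalk {E : Set (SEdge n)} {w : ℕ → Fin n} {s : ℕ → ℤ} {r : ℕ}
    (hr : 0 < r) (hclosed : w r = w 0) (hinj : Set.InjOn w (Set.Iio r))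
    (hE : ∀ k < r, (w k, s k, w (k + 1)) ∈ E) :
    IsCircuit E ((List.range r).map fun k => (w k, s k, w (k + 1))) := by
  refine ⟨by simpa using hr.ne', by simpa using hE, fun k hk => by simp, ?_, ?_⟩
  · simp [List.getLast?_range, List.head?_range, hr.ne', Nat.sub_add_cancel hr, hclosed]
  · rw [List.map_map]
    exact List.nodup_range.map_on fun k hk k' hk' h =>
      hinj (List.mem_range.1 hk) (List.mem_range.1 hk') h

theorem prod_mul_succ_eq_sq_of_closedWalk {M : Type*} [CommMonoid M] (σ : Fin n → M)
    {w : ℕ → Fin n} {r : ℕ} (hclosed : w r = w 0) :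
    ((List.range r).map fun k => σ (w k) * σ (w (k + 1))).prod =
      (∏ k ∈ Finset.range r, σ (w k)) ^ 2 := by
  change ∏ k ∈ Finset.range r, σ (w k) * σ (w (k + 1)) = _
  rw [Finset.prod_mul_distrib, sq]
  congr 1
  cases r with
  | zero => rfl
  | succ r => rw [Finset.prod_range_succ, Finset.prod_range_succ', hclosed, mul_comm]

theorem isPosCircuit_of_closedWalk {E : Set (SEdge n)} (σ : Fin n → ℤ) {w : ℕ → Fin n} {r : ℕ}
    (hr : 0 < r) (hclosed : w r = w 0) (hinj : Set.InjOn w (Set.Iio r))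
    (hσ : ∀ k < r, σ (w k) ≠ 0)
    (hE : ∀ k < r, (w k, σ (w k) * σ (w (k + 1)), w (k + 1)) ∈ E) :
    IsPosCircuit E ((List.range r).map fun k => (w k, σ (w k) * σ (w (k + 1)), w (k + 1))) := by
  refine ⟨isCircuit_of_closedWalk hr hclosed hinj hE, ?_⟩
  simp only [List.map_map, Function.comp_def]
  rw [prod_mul_succ_eq_sq_of_closedWalk σ hclosed]
  exact sq_pos_of_ne_zero (Finset.prod_ne_zero_iff.2 fun k hk => hσ k (Finset.mem_range.1 hk))

theorem exists_isPosCircuit_of_forall_exists_pred {E : Set (SEdge n)} (σ : Fin n → ℤ)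
    (hpred : ∀ i, σ i ≠ 0 → ∃ j, σ j ≠ 0 ∧ (j, σ j * σ i, i) ∈ E) {i₀ : Fin n}
    (hi₀ : σ i₀ ≠ 0) :
    ∃ c, IsPosCircuit E c ∧ ∀ j ∈ c.map Prod.fst, σ j ≠ 0 := by
  have : Nonempty (Fin n) := ⟨i₀⟩
  choose! g hg using hpred
  have hiter : ∀ k, σ (g^[k] i₀) ≠ 0 := fun k => by
    induction k with
    | zero => exact hi₀
    | succ k ih => rw [iterate_succ_apply']; exact (hg _ ih).1
  obtain ⟨p, hp⟩ := exists_iterate_mem_periodicPts g i₀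
  set u := g^[p] i₀
  set r := minimalPeriod g u
  have hr : 0 < r := minimalPeriod_pos_of_mem_periodicPts hp
  have hσ : ∀ k, σ (g^[k] u) ≠ 0 := fun k => by rw [← iterate_add_apply]; exact hiter _
  -- predecessors under `g` walk the orbit of `u` backwards
  have hw : ∀ k < r, g^[r - k] u = g (g^[r - (k + 1)] u) := fun k hk => by
    rw [← iterate_succ_apply' g, show (r - (k + 1)).succ = r - k by omega]
  have hinj : Set.InjOn (fun k => g^[r - k] u) (Set.Iio r) := fun k hk k' hk' h => by
    rw [Set.mem_Iio] at hk hk'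
    have := congrArg (g^[k + k']) h
    simp only [← iterate_add_apply] at this
    rw [show k + k' + (r - k) = k' + r by omega, show k + k' + (r - k') = k + r by omega,
      iterate_add_minimalPeriod_eq, iterate_add_minimalPeriod_eq,
      iterate_eq_iterate_iff_of_lt_minimalPeriod hk' hk] at this
    exact this.symm
  refine ⟨_, isPosCircuit_of_closedWalk σ hr ?_ hinj (fun k _ => hσ _) fun k hk => ?_, ?_⟩
  · rw [Nat.sub_self, Nat.sub_zero, (isPeriodicPt_minimalPeriod g u).eq, iterate_zero_apply]
  · rw [hw k hk]; exact (hg _ (hσ _)).2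
  · simp [hσ]

theorem exists_update_lt_of_lt {ι α β : Type*} [Fintype ι] [DecidableEq ι] [LinearOrder β]
    (f : (ι → α) → β) {x y : ι → α} (hxy : f x < f y) :
    ∃ j z, x j ≠ y j ∧ (∀ l, z l = x l ∨ z l = y l) ∧ z j = x j ∧
      f z < f (update z j (y j)) := by
  suffices ∀ s : Finset ι, ∀ y, (∀ l ∉ s, y l = x l) → f x < f y →
      ∃ j z, x j ≠ y j ∧ (∀ l, z l = x l ∨ z l = y l) ∧ z j = x j ∧
        f z < f (update z j (y j)) from this Finset.univ y (by simp) hxy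
  intro s
  induction s using Finset.induction_on with
  | empty =>
    intro y hy hxy
    obtain rfl : y = x := funext fun l => hy l (Finset.notMem_empty l)
    exact absurd hxy (lt_irrefl _)
  | insert a s ha ih =>
    intro y hy hxy
    by_cases hlast : f (update y a (x a)) < f y
    · have hya : x a ≠ y a := fun h => hlast.ne (by rw [h, update_eq_self])
      refine ⟨a, update y a (x a), hya, fun l => ?_, update_self .., ?_⟩
      · rcases eq_or_ne l a with rfl | hl <;> simp [*]
      · rwa [update_idem, update_eq_self]
    · have hy' : ∀ l ∉ s, update y a (x a) l = x l := fun l hl => by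
        rcases eq_or_ne l a with rfl | hla
        · exact update_self ..
        · rw [update_of_ne hla]; exact hy l (by simp [hla, hl])
      obtain ⟨j, z, hj, hz, hzj, hlt⟩ := ih _ hy' (hxy.trans_le (not_lt.1 hlast))
      have hja : j ≠ a := by rintro rfl; exact hj (by simp)
      rw [update_of_ne hja] at hj hlt
      refine ⟨j, z, hj, fun l => ?_, hzj, hlt⟩
      rcases eq_or_ne l a with rfl | hla
      · exact Or.inl (by simpa using hz l)
      · simpa [hla] using hz l

local notation "𝔹" n:max => StateSpace (fun _ : Fin n => (0 : ℤ)) (fun _ => 1)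

theorem mem_boolCube_iff {x : Fin n → ℤ} : x ∈ 𝔹 n ↔ ∀ i, x i = 0 ∨ x i = 1 :=
  forall_congr' fun i => by dsimp only; omega

theorem mem_globalGraph_of_flip {F : (Fin n → ℤ) → Fin n → ℤ} {z : Fin n → ℤ} (hz : z ∈ 𝔹 n)
    {i j : Fin n} (h₀ : F z i = 0) (h₁ : F (update z j (1 - z j)) i = 1) :
    (j, 1 - 2 * z j, i) ∈ globalGraph (fun _ : Fin n => (0 : ℤ)) (fun _ => 1) F := by
  rw [mem_boolCube_iff] at hz
  let v : Fin n → ℤ := fun l => 1 - 2 * z l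
  have hv : InX' (fun _ : Fin n => (0 : ℤ)) (fun _ => 1) z v := by
    refine ⟨mem_boolCube_iff.2 hz, fun l => ?_, mem_boolCube_iff.2 fun l => ?_⟩ <;>
      rcases hz l with h | h <;> simp [v, h]
  have hjac : jac F z v i j = 1 - 2 * z j := by
    simp only [jac, v, show z j + (1 - 2 * z j) = 1 - z j by ring, h₀, h₁]
    rcases hz j with h | h <;> simp [h]
  simp only [globalGraph, Set.mem_iUnion]
  refine ⟨z, v, hv, ?_⟩
  rcases hz j with h | h <;> simp [localGraph, hjac, h]

theorem exists_pred_of_isFixedPt {F : (Fin n → ℤ) → Fin n → ℤ} (hF : ∀ x ∈ 𝔹 n, F x ∈ 𝔹 n)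
    {x y : Fin n → ℤ} (hx : x ∈ 𝔹 n) (hy : y ∈ 𝔹 n) (hFx : F x = x) (hFy : F y = y) {i : Fin n}
    (hi : x i ≠ y i) :
    ∃ j, x j ≠ y j ∧ (j, (x j - y j) * (x i - y i), i) ∈
      globalGraph (fun _ : Fin n => (0 : ℤ)) (fun _ => 1) F := by
  wlog hlt : x i < y i generalizing x y
  · obtain ⟨j, hj, hE⟩ := this hy hx hFy hFx hi.symm (by omega)
    refine ⟨j, hj.symm, ?_⟩
    convert hE using 3
    ring
  obtain ⟨j, z, hj, hz, hzj, hFz⟩ := exists_update_lt_of_lt (fun z => F z i) (x := x) (y := y)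
    (by simpa [hFx, hFy] using hlt)
  rw [mem_boolCube_iff] at hx hy
  have hz01 : ∀ l, z l = 0 ∨ z l = 1 := fun l => by rcases hz l with h | h <;> simp [h, hx, hy]
  have hyj : y j = 1 - z j := by have := hx j; have := hy j; omega
  have hz'01 : ∀ l, update z j (y j) l = 0 ∨ update z j (y j) l = 1 := fun l => by
    rcases eq_or_ne l j with rfl | hl
    · simpa using hy l
    · simpa [hl] using hz01 l
  have hF₀ := mem_boolCube_iff.1 (hF _ (mem_boolCube_iff.2 hz01)) i
  have hF₁ := mem_boolCube_iff.1 (hF _ (mem_boolCube_iff.2 hz'01)) i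
  obtain ⟨hxi, hyi⟩ : x i = 0 ∧ y i = 1 := by have := hx i; have := hy i; omega
  refine ⟨j, hj, ?_⟩
  convert mem_globalGraph_of_flip (F := F) (i := i) (j := j) (mem_boolCube_iff.2 hz01)
    (by omega) (by rw [← hyj]; omega) using 3
  rw [hxi, hyi, hyj, hzj]
  ring

theorem eq_of_isFixedPt_of_eqOn_of_isPFVS {F : (Fin n → ℤ) → Fin n → ℤ}
    (hF : ∀ x ∈ 𝔹 n, F x ∈ 𝔹 n) {I : Finset (Fin n)}
    (hI : IsPFVS (globalGraph (fun _ : Fin n => (0 : ℤ)) (fun _ => 1) F) I)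
    {x y : Fin n → ℤ} (hx : x ∈ 𝔹 n) (hy : y ∈ 𝔹 n) (hFx : F x = x) (hFy : F y = y)
    (hxy : ∀ i ∈ I, x i = y i) : x = y := by
  by_contra hne
  obtain ⟨i₀, hi₀⟩ := Function.ne_iff.1 hne
  obtain ⟨c, hc, hcσ⟩ := exists_isPosCircuit_of_forall_exists_pred (x - y)
    (fun i hi => (exists_pred_of_isFixedPt hF hx hy hFx hFy (sub_ne_zero.1 hi)).imp
      fun j hj => ⟨sub_ne_zero.2 hj.1, hj.2⟩) (sub_ne_zero.2 hi₀)
  obtain ⟨i, hiI, hic⟩ := hI c hc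
  exact hcσ i hic (sub_eq_zero.2 (hxy i hiI))

/-- Boolean case: if every positive circuit of the global interaction
graph `𝐆(F)` has a vertex in `I`, then `F` has at most `2 ^ |I|` fixed
points. -/
theorem stmt2 {n : ℕ} (F : (Fin n → ℤ) → Fin n → ℤ)
    (hF : ∀ x ∈ StateSpace (fun _ : Fin n => (0 : ℤ)) (fun _ => 1),
      F x ∈ StateSpace (fun _ : Fin n => (0 : ℤ)) (fun _ => 1))
    (I : Finset (Fin n))
    (hI : IsPFVS (globalGraph (fun _ : Fin n => (0 : ℤ)) (fun _ => 1) F) I) :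
    {x ∈ StateSpace (fun _ : Fin n => (0 : ℤ)) (fun _ => 1) | F x = x}.ncard
      ≤ 2 ^ I.card := by
  have hinj : Set.InjOn (fun x : Fin n → ℤ => I.filter (x · = 1)) {x ∈ 𝔹 n | F x = x} :=
    fun x hx y hy hxy => eq_of_isFixedPt_of_eqOn_of_isPFVS hF hI hx.1 hy.1 hx.2 hy.2 fun i hi => by
      have := congrArg (i ∈ ·) hxy
      simp only [Finset.mem_filter, hi, true_and, eq_iff_iff] at this
      have := mem_boolCube_iff.1 hx.1 i; have := mem_boolCube_iff.1 hy.1 i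
      omega
  calc _ ≤ (I.powerset : Set (Finset (Fin n))).ncard :=
        Set.ncard_le_ncard_of_injOn _ (fun x _ => Finset.mem_powerset.2 (Finset.filter_subset _ _))
          hinj (Finset.finite_toSet _)
    _ = 2 ^ I.card := by rw [Set.ncard_coe_finset, Finset.card_powerset]
end

section
/- Let X = ∏_{i=1}^n X_i be a product of n finite intervals of integers, each of cardinality at least 2, and let F be a map from X to itself. If I ⊆ {1,…,n} is such that every positive circuit of the global interaction graph G(F) has at least one vertex in I, then the number of attractors of the asynchronous state transition graph Γ(F) is at most ∏_{i∈I} |X_i|; in particular, the number of fixed points of F is at most ∏_{i∈I} |X_i|. -/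
/-!
Attractors are told apart by the values on `I` of any of their points, so it suffices that two
attractors `A`, `B` containing points that agree on `I` coincide. Among the points of `A` and `B`
with these prescribed values on `I`, take `p ∈ A` and `q ∈ B` at minimal `ℓ¹` distance. In each
coordinate `j` where they differ (so `j ∉ I`), minimality forbids `F` to push `p` towards `q` or
`q` towards `p`. Along a monotone lattice path from `p` to `q`, `F_j` must therefore cross a
threshold, which yields an edge `k → j` of `G(F)` of sign `σ_k σ_j`, where `σ` is the direction
from `p` to `q` and `p_k ≠ q_k`. Following these edges backwards closes a circuit whose sign is a
product of squares: a positive circuit avoiding `I`, unless `p = q`.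
-/

open Function Set

lemma sign_sub_eq_one_or_neg_one {u v : ℤ} (h : u ≠ v) :
    (v - u).sign = 1 ∨ (v - u).sign = -1 := by
  rcases lt_or_gt_of_ne h with h | h
  · exact Or.inl (Int.sign_eq_one_of_pos (by omega))
  · exact Or.inr (Int.sign_eq_neg_one_of_neg (by omega))

lemma sign_eq_of_pos_mul {s d : ℤ} (hs : s = 1 ∨ s = -1) (h : 0 < s * d) : d.sign = s := by
  rcases hs with rfl | rfl
  · exact Int.sign_eq_one_of_pos (by omega)
  · exact Int.sign_eq_neg_one_of_neg (by omega)

lemma natAbs_add_sign_sub_lt {u v : ℤ} (h : u ≠ v) :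
    (u + (v - u).sign - v).natAbs < (u - v).natAbs := by
  rcases lt_or_gt_of_ne h with h | h
  · rw [Int.sign_eq_one_of_pos (by omega)]; omega
  · rw [Int.sign_eq_neg_one_of_neg (by omega)]; omega

lemma add_sign_sub_mem_uIcc (u v : ℤ) : u + (v - u).sign ∈ uIcc u v := by
  rw [mem_uIcc]
  rcases lt_trichotomy u v with h | rfl | h
  · rw [Int.sign_eq_one_of_pos (by omega)]; omega
  · simp
  · rw [Int.sign_eq_neg_one_of_neg (by omega)]; omega

lemma sign_sub_eq_of_mem_uIcc {p q x : ℤ} (hx : x ∈ uIcc p q) (h : x ≠ q) :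
    (q - x).sign = (q - p).sign := by
  rw [mem_uIcc] at hx
  rcases lt_or_gt_of_ne h with h | h
  · rw [Int.sign_eq_one_of_pos (by omega), Int.sign_eq_one_of_pos (by omega)]
  · rw [Int.sign_eq_neg_one_of_neg (by omega), Int.sign_eq_neg_one_of_neg (by omega)]

lemma add_dir_mem_uIcc {p q x : ℤ} (hx : x ∈ uIcc p q) (hpq : p ≠ q) :
    x + (if x = q then -(q - p).sign else (q - p).sign) ∈ uIcc p q := by
  rw [mem_uIcc] at hx ⊢
  rcases lt_or_gt_of_ne hpq with h | h
  · rw [Int.sign_eq_one_of_pos (by omega)]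
    split_ifs <;> omega
  · rw [Int.sign_eq_neg_one_of_neg (by omega)]
    split_ifs <;> omega

lemma bothSides_of_lt_of_le {s u u' m c : ℤ} (hs : s = 1 ∨ s = -1) (hu : s * (u - m) < c)
    (hu' : c ≤ s * (u' - m)) : BothSides u u' (m + (s * (2 * c - 1) : ℤ) / 2) := by
  rcases hs with rfl | rfl
  · have hu1 : u ≤ m + c - 1 := by omega
    have hu1' : m + c ≤ u' := by omega
    left
    constructor <;> (push_cast; qify at hu1 hu1'; linarith)
  · have hu1 : m - c + 1 ≤ u := by omega
    have hu1' : u' ≤ m - c := by omega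
    right
    constructor <;> (push_cast; qify at hu1 hu1'; linarith)

section Lattice

variable {ι : Type*}

lemma mem_uIcc_pi {α : ι → Type*} [∀ i, Lattice (α i)] {x y z : ∀ i, α i} :
    z ∈ uIcc x y ↔ ∀ c, z c ∈ uIcc (x c) (y c) := by
  rw [← pi_univ_uIcc]
  simp only [mem_pi, mem_univ, true_implies]

def manhattanDist [Fintype ι] (x y : ι → ℤ) : ℕ := ∑ c, (x c - y c).natAbs

lemma manhattanDist_comm [Fintype ι] (x y : ι → ℤ) : manhattanDist x y = manhattanDist y x :=
  Finset.sum_congr rfl fun c _ => by omega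

def stepToward [DecidableEq ι] (x y : ι → ℤ) (k : ι) : ι → ℤ :=
  update x k (x k + (y k - x k).sign)

lemma manhattanDist_stepToward_lt [Fintype ι] [DecidableEq ι] {x y : ι → ℤ} {k : ι}
    (h : x k ≠ y k) :
    manhattanDist (stepToward x y k) y < manhattanDist x y := by
  refine Finset.sum_lt_sum (fun c _ => ?_) ⟨k, Finset.mem_univ k, ?_⟩
  · rcases eq_or_ne c k with rfl | hc
    · simpa [stepToward] using (natAbs_add_sign_sub_lt h).le
    · simp [stepToward, hc]
  · simpa [stepToward] using natAbs_add_sign_sub_lt h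

lemma stepToward_mem_uIcc [DecidableEq ι] (x y : ι → ℤ) (k : ι) :
    stepToward x y k ∈ uIcc x y := by
  refine mem_uIcc_pi.2 fun c => ?_
  rcases eq_or_ne c k with rfl | hc
  · simpa [stepToward] using add_sign_sub_mem_uIcc (x c) (y c)
  · simp [stepToward, hc]

theorem exists_stepToward_of_not [Fintype ι] [DecidableEq ι] {P : (ι → ℤ) → Prop}
    {x y : ι → ℤ} (hx : P x) (hy : ¬ P y) :
    ∃ z ∈ uIcc x y, ∃ k, z k ≠ y k ∧ P z ∧ ¬ P (stepToward z y k) := by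
  induction hd : manhattanDist x y using Nat.strong_induction_on generalizing x with
  | _ d ih =>
  obtain ⟨k, hk⟩ : ∃ k, x k ≠ y k := by
    by_contra! h
    exact hy (funext h ▸ hx)
  by_cases hstep : P (stepToward x y k)
  · obtain ⟨z, hz, hzk⟩ := ih _ (hd ▸ manhattanDist_stepToward_lt hk) hstep rfl
    exact ⟨z, uIcc_subset_uIcc (stepToward_mem_uIcc x y k) right_mem_uIcc hz, hzk⟩
  · exact ⟨x, left_mem_uIcc, k, hk, hx, hstep⟩

end Lattice

section InteractionGraph

variable {n : ℕ} {a b : Fin n → ℤ} {F : (Fin n → ℤ) → Fin n → ℤ}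

lemma stateSpace_eq_Icc (a b : Fin n → ℤ) : StateSpace a b = Icc a b := by
  ext x
  simp only [StateSpace, mem_ofPred_eq, mem_Icc, Pi.le_def, forall_and]

lemma stateSpace_finite (a b : Fin n → ℤ) : (StateSpace a b).Finite := by
  rw [stateSpace_eq_Icc]
  exact finite_Icc a b

lemma jac_eq_mul {x v : Fin n → ℤ} {j k : Fin n} (hv : v k = 1 ∨ v k = -1) :
    jac F x v j k = (F (update x k (x k + v k)) j - F x j) * v k := by
  unfold jac
  rcases hv with h | h <;> rw [h] <;> omega

lemma mem_globalGraphT_of_bothSides {x v : Fin n → ℤ} {j k : Fin n} (hxv : InX' a b x v)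
    (h : BothSides (F x j) (F (update x k (x k + v k)) j) (x j + v j / 2)) :
    (k, (jac F x v j k).sign, j) ∈ globalGraphT a b F := by
  simp only [globalGraphT, mem_iUnion]
  refine ⟨x, v, hxv, ?_, h⟩
  have hne : F (update x k (x k + v k)) j ≠ F x j := by
    intro heq
    rw [heq] at h
    rcases h with h | h <;> linarith [h.1, h.2]
  rcases lt_trichotomy (jac F x v j k) 0 with hneg | hzero | hpos
  · exact Or.inr ⟨Int.sign_eq_neg_one_of_neg hneg, hneg⟩
  · rw [jac_eq_mul (hxv.2.1 k), mul_eq_zero, sub_eq_zero] at hzero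
    rcases hzero with h0 | h0
    · exact absurd h0 hne
    · rcases hxv.2.1 k with hk | hk <;> omega
  · exact Or.inl ⟨Int.sign_eq_one_of_pos hpos, hpos⟩

lemma exists_inX'_eqOn (hab : ∀ i, a i + 1 ≤ b i) {x : Fin n → ℤ} (hx : x ∈ StateSpace a b)
    {S : Set (Fin n)} {w : Fin n → ℤ}
    (hw : ∀ c ∈ S, (w c = 1 ∨ w c = -1) ∧ x c + w c ∈ Icc (a c) (b c)) :
    ∃ v, InX' a b x v ∧ EqOn v w S := by
  classical
  refine ⟨fun c => if c ∈ S then w c else if x c < b c then 1 else -1,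
    ⟨hx, fun c => ?_, fun c => ?_⟩, fun c hc => if_pos hc⟩
  · by_cases hc : c ∈ S
    · simpa [hc] using (hw c hc).1
    · simp only [hc, if_false]
      split_ifs <;> simp
  · by_cases hc : c ∈ S
    · simpa [hc] using (hw c hc).2
    · have := hx c
      have := hab c
      simp only [Pi.add_apply, hc, if_false]
      split_ifs <;> constructor <;> omega

lemma exists_inX'_of_mem_uIcc (hab : ∀ i, a i + 1 ≤ b i) {p q x : Fin n → ℤ}
    (hp : p ∈ StateSpace a b) (hq : q ∈ StateSpace a b) (hx : x ∈ uIcc p q) :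
    ∃ v, InX' a b x v ∧ ∀ c, p c ≠ q c →
      v c = if x c = q c then -(q c - p c).sign else (q c - p c).sign := by
  have hxX : x ∈ StateSpace a b := by
    rw [stateSpace_eq_Icc] at hp hq ⊢
    exact uIcc_subset_Icc hp hq hx
  refine exists_inX'_eqOn hab hxX fun c hc => ⟨?_, ?_⟩
  · split_ifs <;> rcases sign_sub_eq_one_or_neg_one hc with h | h <;> simp [h]
  · exact uIcc_subset_Icc (hp c) (hq c) (add_dir_mem_uIcc (mem_uIcc_pi.1 hx c) hc)

theorem exists_inEdge_of_not_toward (hab : ∀ i, a i + 1 ≤ b i) {p q : Fin n → ℤ}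
    (hp : p ∈ StateSpace a b) (hq : q ∈ StateSpace a b) {j : Fin n} (hj : p j ≠ q j)
    (hpj : (q j - p j).sign * (F p j - p j) ≤ 0) (hqj : 0 ≤ (q j - p j).sign * (F q j - q j)) :
    ∃ k, p k ≠ q k ∧ (k, (q k - p k).sign * (q j - p j).sign, j) ∈ globalGraphT a b F := by
  obtain ⟨σ, hσ⟩ : ∃ σ : Fin n → ℤ, ∀ c, σ c = (q c - p c).sign := ⟨_, fun _ => rfl⟩
  have hσ1 : ∀ c, p c ≠ q c → σ c = 1 ∨ σ c = -1 := fun c hc =>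
    hσ c ▸ sign_sub_eq_one_or_neg_one hc
  simp only [← hσ] at hpj hqj ⊢
  -- `P z`: `F_j z` lies on the side of `p` of the threshold `z_j + w_j / 2`, where `w_j` points
  -- towards `q_j`, or back towards `p_j` once `z_j = q_j`. A step towards `q` never moves the
  -- threshold towards `p`, so where `P` fails, `F_j` crosses the threshold of `z`.
  obtain ⟨x, hx, k, hk, hPx, hPx'⟩ := exists_stepToward_of_not
    (P := fun z => σ j * (F z j - z j) < if z j = q j then 0 else 1) (x := p) (y := q)
    (by simp only [if_neg hj]; omega) (by simpa using hqj)
  have hσk : (q k - x k).sign = σ k :=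
    (sign_sub_eq_of_mem_uIcc (mem_uIcc_pi.1 hx k) hk).trans (hσ k).symm
  have hpk : p k ≠ q k := fun h => hk (by simpa [h] using mem_uIcc_pi.1 hx k)
  obtain ⟨v, hv, hvw⟩ := exists_inX'_of_mem_uIcc hab hp hq hx
  simp only [← hσ] at hvw
  have hvk : v k = σ k := by simp [hvw k hpk, hk]
  have hupd : update x k (x k + v k) = stepToward x q k := by rw [hvk, ← hσk]; rfl
  have hcross : σ j * (F x j - x j) < (if x j = q j then 0 else 1) ∧
      (if x j = q j then 0 else 1) ≤ σ j * (F (stepToward x q k) j - x j) := by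
    refine ⟨hPx, ?_⟩
    rcases eq_or_ne k j with rfl | hkj
    · rw [show stepToward x q k k = x k + σ k by simp [stepToward, hσk]] at hPx'
      simp only [if_neg hk]
      split_ifs at hPx' <;> rcases hσ1 k hj with h | h <;> rw [h] at hPx' ⊢ <;> omega
    · simpa [stepToward, update_of_ne hkj.symm] using hPx'
  have hbs : BothSides (F x j) (F (update x k (x k + v k)) j) (x j + v j / 2) := by
    have hvj : v j = σ j * (2 * (if x j = q j then 0 else 1) - 1) := by
      rw [hvw j hj]
      split_ifs <;> ring
    rw [hupd, hvj]
    exact bothSides_of_lt_of_le (hσ1 j hj) hcross.1 hcross.2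
  have hsign : (jac F x v j k).sign = σ k * σ j := by
    have hjump := sign_eq_of_pos_mul (hσ1 j hj)
      (d := F (stepToward x q k) j - F x j) (by linarith [hcross.1, hcross.2])
    rw [jac_eq_mul (hv.2.1 k), hupd, hvk, Int.sign_mul, hjump, mul_comm]
    rcases hσ1 k hpk with h | h <;> rw [h] <;> rfl
  exact ⟨k, hpk, hsign ▸ mem_globalGraphT_of_bothSides hv hbs⟩

end InteractionGraph

section Circuits

variable {n : ℕ}

lemma exists_mem_periodicPts_of_mapsTo {α : Type*} [Finite α] {g : α → α} {D : Set α}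
    (hg : MapsTo g D D) (hD : D.Nonempty) : ∃ x ∈ D, x ∈ periodicPts g := by
  obtain ⟨x₀, hx₀⟩ := hD
  obtain ⟨s, t, hst, heq⟩ := Finite.exists_ne_map_eq_of_infinite fun t : ℕ => g^[t] x₀
  wlog hlt : s < t generalizing s t
  · exact this t s hst.symm heq.symm (by omega)
  refine ⟨g^[s] x₀, hg.iterate s hx₀, mk_mem_periodicPts (n := t - s) (by omega) ?_⟩
  rw [IsPeriodicPt, IsFixedPt, ← iterate_add_apply, Nat.sub_add_cancel hlt.le]
  exact heq.symm

lemma isCircuit_ofFn {E : Set (SEdge n)} {m : ℕ} (e : Fin (m + 1) → SEdge n)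
    (hE : ∀ t, e t ∈ E) (hchain : ∀ t : Fin m, (e t.castSucc).2.2 = (e t.succ).1)
    (hclose : (e (Fin.last m)).2.2 = (e 0).1) (hinj : Injective fun t => (e t).1) :
    IsCircuit E (List.ofFn e) := by
  refine ⟨by simp, fun x hx => ?_, fun k hk => ?_, ?_, ?_⟩
  · obtain ⟨t, rfl⟩ := List.mem_ofFn.1 hx
    exact hE t
  · simp only [List.length_ofFn] at hk
    simp only [List.get_eq_getElem, List.getElem_ofFn]
    exact hchain ⟨k, by omega⟩
  · rw [List.getLast?_eq_some_getLast (by simp), List.head?_eq_some_head (by simp),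
      List.getLast_ofFn, List.head_ofFn]
    exact congrArg some hclose
  · rw [List.map_ofFn, List.nodup_ofFn]
    exact hinj

lemma prod_range_succ_shift {M : Type*} [CommMonoid M] (f : ℕ → M) {m : ℕ}
    (h : f (m + 1) = f 0) :
    ∏ s ∈ Finset.range (m + 1), f (s + 1) = ∏ s ∈ Finset.range (m + 1), f s := by
  rw [Finset.prod_range_succ, h, Finset.prod_range_succ' f]

lemma prod_sign_mul_sign_pos {α : Type*} {σ : α → ℤ} {g : α → α} {x : α} {m : ℕ}
    (hper : g^[m + 1] x = x) (hσ : ∀ t, σ (g^[t] x) ≠ 0) :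
    0 < ∏ t : Fin (m + 1), σ (g (g^[m - t] x)) * σ (g^[m - t] x) := by
  have hreflect : ∏ t : Fin (m + 1), σ (g (g^[m - t] x)) * σ (g^[m - t] x) =
      ∏ s ∈ Finset.range (m + 1), σ (g^[s + 1] x) * σ (g^[s] x) := by
    rw [← Finset.prod_range_reflect, ← Fin.prod_univ_eq_prod_range
      (fun t => σ (g^[m + 1 - 1 - t + 1] x) * σ (g^[m + 1 - 1 - t] x))]
    simp [iterate_succ_apply']
  rw [hreflect, Finset.prod_mul_distrib,
    prod_range_succ_shift (fun s => σ (g^[s] x)) (by rw [hper, iterate_zero_apply])]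
  exact mul_self_pos.2 (Finset.prod_ne_zero_iff.2 fun s _ => hσ s)

theorem exists_posCircuit_of_forall_inEdge {E : Set (SEdge n)} {D : Set (Fin n)}
    {σ : Fin n → ℤ} (hσ : ∀ j ∈ D, σ j ≠ 0) (hD : D.Nonempty)
    (hin : ∀ j ∈ D, ∃ k ∈ D, (k, σ k * σ j, j) ∈ E) :
    ∃ c, IsPosCircuit E c ∧ ∀ e ∈ c, e.1 ∈ D := by
  choose! g hgD hgE using hin
  obtain ⟨x, hxD, hx⟩ := exists_mem_periodicPts_of_mapsTo (g := g) hgD hD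
  obtain ⟨m, hm⟩ := Nat.exists_eq_succ_of_ne_zero (minimalPeriod_pos_of_mem_periodicPts hx).ne'
  have hper : g^[m + 1] x = x := by
    rw [← Nat.succ_eq_add_one, ← hm]
    exact iterate_minimalPeriod
  have hmem : ∀ t, g^[t] x ∈ D := fun t => MapsTo.iterate (f := g) hgD t hxD
  -- `g` picks predecessors, so the circuit runs backwards through the orbit of `x`.
  set e : Fin (m + 1) → SEdge n := fun t =>
    (g (g^[m - t] x), σ (g (g^[m - t] x)) * σ (g^[m - t] x), g^[m - t] x) with he
  refine ⟨List.ofFn e, ⟨isCircuit_ofFn e (fun t => hgE _ (hmem _)) (fun t => ?_) ?_ ?_, ?_⟩,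
    fun _ he' => ?_⟩
  · simp only [he, Fin.val_castSucc, Fin.val_succ, ← iterate_succ_apply' g]
    congr 1
    omega
  · simp only [he, Fin.val_last, Nat.sub_self, iterate_zero_apply, Fin.val_zero, Nat.sub_zero]
    rw [← iterate_succ_apply' g, hper]
  · intro t t' htt
    simp only [he, ← iterate_succ_apply'] at htt
    have hinj := iterate_injOn_Iio_minimalPeriod (f := g) (x := g x)
    rw [minimalPeriod_apply hx, hm] at hinj
    have := hinj (by simp only [mem_Iio]; omega) (by simp only [mem_Iio]; omega) htt
    ext
    omega
  · rw [List.map_ofFn, List.prod_ofFn]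
    exact prod_sign_mul_sign_pos hper fun t => hσ _ (hmem t)
  · obtain ⟨t, rfl⟩ := List.mem_ofFn.1 he'
    exact hgD _ (hmem _)

end Circuits

section Attractors

variable {n : ℕ} {a b : Fin n → ℤ} {F : (Fin n → ℤ) → Fin n → ℤ} {I : Finset (Fin n)}

lemma sign_mul_sub_nonpos_of_forall_le {P : Set (Fin n → ℤ)}
    (hP : ∀ x ∈ P, ∀ y, Async F x y → (∀ i ∈ I, y i = x i) → y ∈ P) {p q : Fin n → ℤ}
    (hp : p ∈ P) (hpq : ∀ i ∈ I, p i = q i)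
    (hmin : ∀ x ∈ P, manhattanDist p q ≤ manhattanDist x q) {j : Fin n} (hj : p j ≠ q j) :
    (q j - p j).sign * (F p j - p j) ≤ 0 := by
  by_contra! hpos
  have hsign : (F p j - p j).sign = (q j - p j).sign :=
    sign_eq_of_pos_mul (sign_sub_eq_one_or_neg_one hj) hpos
  have hFj : F p j ≠ p j := fun h => by simp [h] at hpos
  have hstep : stepToward p q j ∈ P := hP p hp _ ⟨j, hFj, by rw [hsign]; rfl⟩
    fun i hi => update_of_ne (by rintro rfl; exact hj (hpq _ hi)) _ _
  exact (manhattanDist_stepToward_lt hj).not_ge (hmin _ hstep)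

lemma sign_mul_sub_nonneg_of_forall_le {Q : Set (Fin n → ℤ)}
    (hQ : ∀ x ∈ Q, ∀ y, Async F x y → (∀ i ∈ I, y i = x i) → y ∈ Q) {p q : Fin n → ℤ}
    (hq : q ∈ Q) (hpq : ∀ i ∈ I, p i = q i)
    (hmin : ∀ y ∈ Q, manhattanDist p q ≤ manhattanDist p y) {j : Fin n} (hj : p j ≠ q j) :
    0 ≤ (q j - p j).sign * (F q j - q j) := by
  have := sign_mul_sub_nonpos_of_forall_le hQ hq (fun i hi => (hpq i hi).symm)
    (fun y hy => by simpa only [manhattanDist_comm _ p] using hmin y hy) (Ne.symm hj)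
  rw [← neg_sub, Int.sign_neg, neg_mul] at this
  exact neg_nonpos.1 this

theorem eq_of_not_toward (hab : ∀ i, a i + 1 ≤ b i) (hI : IsPFVS (globalGraphT a b F) I)
    {p q : Fin n → ℤ} (hp : p ∈ StateSpace a b) (hq : q ∈ StateSpace a b)
    (hpq : ∀ i ∈ I, p i = q i)
    (hpF : ∀ j, p j ≠ q j → (q j - p j).sign * (F p j - p j) ≤ 0)
    (hqF : ∀ j, p j ≠ q j → 0 ≤ (q j - p j).sign * (F q j - q j)) : p = q := by
  by_contra hne
  obtain ⟨c, hc, hcD⟩ := exists_posCircuit_of_forall_inEdge (D := {j | p j ≠ q j})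
    (fun j hj => by rw [Ne, Int.sign_eq_zero_iff_zero, sub_eq_zero]; exact Ne.symm hj)
    (ne_iff.1 hne)
    fun j hj => exists_inEdge_of_not_toward hab hp hq hj (hpF j hj) (hqF j hj)
  obtain ⟨i, hi, hic⟩ := hI c hc
  obtain ⟨e, he, rfl⟩ := List.mem_map.1 hic
  exact hcD e he (hpq _ hi)

lemma IsTrapDomain.async_mem_slice {T : Set (Fin n → ℤ)} (hT : IsTrapDomain a b F T)
    (x₀ : Fin n → ℤ) :
    ∀ x ∈ {x ∈ T | ∀ i ∈ I, x i = x₀ i}, ∀ y, Async F x y → (∀ i ∈ I, y i = x i) →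
      y ∈ {x ∈ T | ∀ i ∈ I, x i = x₀ i} :=
  fun x hx y hxy hyx => ⟨hT.2.2 x hx.1 y hxy, fun i hi => (hyx i hi).trans (hx.2 i hi)⟩

lemma IsAttractor.eq_of_inter_nonempty {A B : Set (Fin n → ℤ)} (hA : IsAttractor a b F A)
    (hB : IsAttractor a b F B) (h : (A ∩ B).Nonempty) : A = B := by
  have hT : IsTrapDomain a b F (A ∩ B) := ⟨h, inter_subset_left.trans hA.1.2.1,
    fun x hx y hxy => ⟨hA.1.2.2 x hx.1 y hxy, hB.1.2.2 x hx.2 y hxy⟩⟩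
  exact (hA.2 _ hT inter_subset_left).symm.trans (hB.2 _ hT inter_subset_right)

theorem IsAttractor.eq_of_eqOn (hab : ∀ i, a i + 1 ≤ b i) (hI : IsPFVS (globalGraphT a b F) I)
    {A B : Set (Fin n → ℤ)} (hA : IsAttractor a b F A) (hB : IsAttractor a b F B)
    {x y : Fin n → ℤ} (hx : x ∈ A) (hy : y ∈ B) (hxy : ∀ i ∈ I, x i = y i) : A = B := by
  set P := {z ∈ A | ∀ i ∈ I, z i = x i}
  set Q := {z ∈ B | ∀ i ∈ I, z i = y i}
  have hfin : (P ×ˢ Q).Finite := ((stateSpace_finite a b).prod (stateSpace_finite a b)).subset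
    (prod_mono (fun z hz => hA.1.2.1 hz.1) fun z hz => hB.1.2.1 hz.1)
  obtain ⟨⟨p, q⟩, ⟨hp, hq⟩, hmin⟩ := (P ×ˢ Q).exists_min_image
    (fun z => manhattanDist z.1 z.2) hfin ⟨(x, y), ⟨hx, fun _ _ => rfl⟩, hy, fun _ _ => rfl⟩
  dsimp only at hp hq hmin
  have hpq : ∀ i ∈ I, p i = q i := fun i hi => by rw [hp.2 i hi, hq.2 i hi, hxy i hi]
  have hpq_eq : p = q := eq_of_not_toward hab hI (hA.1.2.1 hp.1) (hB.1.2.1 hq.1) hpq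
    (fun j hj => sign_mul_sub_nonpos_of_forall_le (hA.1.async_mem_slice x) hp hpq
      (fun z hz => hmin (z, q) ⟨hz, hq⟩) hj)
    fun j hj => sign_mul_sub_nonneg_of_forall_le (hB.1.async_mem_slice y) hq hpq
      (fun z hz => hmin (p, z) ⟨hp, hz⟩) hj
  exact hA.eq_of_inter_nonempty hB ⟨p, hp.1, hpq_eq ▸ hq.1⟩

lemma isAttractor_singleton {x : Fin n → ℤ} (hx : x ∈ StateSpace a b) (hFx : F x = x) :
    IsAttractor a b F {x} := by
  refine ⟨⟨singleton_nonempty x, singleton_subset_iff.2 hx, ?_⟩, fun B hB hBx => ?_⟩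
  · rintro y rfl z ⟨i, hi, -⟩
    exact absurd (congrFun hFx i) hi
  · exact (subset_singleton_iff_eq.1 hBx).resolve_left hB.1.ne_empty

lemma attractors_finite (a b : Fin n → ℤ) (F : (Fin n → ℤ) → Fin n → ℤ) :
    {A | IsAttractor a b F A}.Finite :=
  (stateSpace_finite a b).finite_subsets.subset fun _ hA => hA.1.2.1

end Attractors

theorem stmt5_general {n : ℕ} (a b : Fin n → ℤ) (hab : ∀ i, a i + 1 ≤ b i)
    (F : (Fin n → ℤ) → Fin n → ℤ)
    (I : Finset (Fin n))
    (hI : IsPFVS (globalGraphT a b F) I) :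
    {A | IsAttractor a b F A}.ncard ≤ ∏ i ∈ I, (b i - a i + 1).toNat ∧
    {x ∈ StateSpace a b | F x = x}.ncard ≤ ∏ i ∈ I, (b i - a i + 1).toNat := by
  classical
  choose! pt hpt using fun A (hA : IsAttractor a b F A) => hA.1.1
  have hcard : {A | IsAttractor a b F A}.ncard ≤ ∏ i ∈ I, (b i - a i + 1).toNat :=
    calc {A | IsAttractor a b F A}.ncard
        ≤ (I.pi fun i => Finset.Icc (a i) (b i) : Set ((i : Fin n) → i ∈ I → ℤ)).ncard :=
          ncard_le_ncard_of_injOn (fun A i _ => pt A i)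
            (fun A hA => Finset.mem_pi.2 fun i _ => Finset.mem_Icc.2 (hA.1.2.1 (hpt A hA) i))
            (fun A hA B hB hAB => hA.eq_of_eqOn hab hI hB (hpt A hA) (hpt B hB)
              fun i hi => congrFun₂ hAB i hi)
            (Finset.finite_toSet _)
      _ = ∏ i ∈ I, (b i - a i + 1).toNat := by
          simp only [ncard_coe_finset, Finset.card_pi, Int.card_Icc, sub_add_eq_add_sub]
  exact ⟨hcard, (ncard_le_ncard_of_injOn (fun x => {x})
    (fun x hx => isAttractor_singleton hx.1 hx.2) singleton_injective.injOn
    (attractors_finite a b F)).trans hcard⟩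

/-- If `I` is a positive feedback vertex set of the global interaction
graph `G(F)`, then `Γ(F)` has at most `∏_{i ∈ I} |X_i|` attractors; in
particular `F` has at most `∏_{i ∈ I} |X_i|` fixed points. -/
theorem stmt5 {n : ℕ} (a b : Fin n → ℤ) (hab : ∀ i, a i + 1 ≤ b i)
    (F : (Fin n → ℤ) → Fin n → ℤ)
    (hF : ∀ x ∈ StateSpace a b, F x ∈ StateSpace a b)
    (I : Finset (Fin n))
    (hI : IsPFVS (globalGraphT a b F) I) :
    {A | IsAttractor a b F A}.ncard ≤ ∏ i ∈ I, (b i - a i + 1).toNat ∧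
    {x ∈ StateSpace a b | F x = x}.ncard ≤ ∏ i ∈ I, (b i - a i + 1).toNat :=
  stmt5_general a b hab F I hI
end
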